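/- Let G be in class B with diam(G) ≥ 4 and T_G its associated tree. If T_G has exactly two central vertices, then at least one of them is a cut-vertex of G. -/

import Mathlib

open SimpleGraph

variable {V : Type*}

/-- `v` is a cut-vertex of the graph `G`: deleting `v` disconnects `G`. -/
def CutVtx (G : SimpleGraph V) (v : V) : Prop :=
  ¬ (G.induce {v}ᶜ).Connected

/-- A nonseparable graph: connected and with no cut-vertex. -/
def NoCutVtx {W : Type*} (H : SimpleGraph W) : Prop :=
  H.Connected ∧ ∀ w : W, (H.induce {w}ᶜ).Connected

/-- `B` is (the vertex set of) a block of `G`: a maximal nonseparable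
induced subgraph. -/
def IsBlockSet (G : SimpleGraph V) (B : Set V) : Prop :=
  NoCutVtx (G.induce B) ∧ ∀ C : Set V, B ⊆ C → NoCutVtx (G.induce C) → B = C

/-- The set of cut-vertices of `G`. -/
def cutSet (G : SimpleGraph V) : Set V := {v | CutVtx G v}

/-- The set `B` induces a complete bipartite graph in `G` with
bipartition `(V1, V2)`. -/
def CompBipOn (G : SimpleGraph V) (B V1 V2 : Set V) : Prop :=
  V1.Nonempty ∧ V2.Nonempty ∧ Disjoint V1 V2 ∧ V1 ∪ V2 = B ∧
    ∀ x ∈ B, ∀ y ∈ B, (G.Adj x y ↔ (x ∈ V1 ∧ y ∈ V2) ∨ (x ∈ V2 ∧ y ∈ V1))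

/-- A bi-block graph: a connected graph all of whose blocks are
complete bipartite. -/
def BiBlockGraph (G : SimpleGraph V) : Prop :=
  G.Connected ∧ ∀ B : Set V, IsBlockSet G B → ∃ V1 V2 : Set V, CompBipOn G B V1 V2

/-- The class 𝓑: bi-block graphs with at least two blocks and at most two
cut-vertices in each block. -/
def ClassB (G : SimpleGraph V) : Prop :=
  BiBlockGraph G ∧
  (∃ B1 B2 : Set V, IsBlockSet G B1 ∧ IsBlockSet G B2 ∧ B1 ≠ B2) ∧
  ∀ B : Set V, IsBlockSet G B → (B ∩ cutSet G).ncard ≤ 2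

/-- `S` is an admissible vertex set for the associated tree `T_G`:
it contains all cut-vertices of `G`, both vertices of every `K_{1,1}` block,
exactly one non-cut-vertex from each partite set of every leaf block,
exactly one non-cut-vertex from the cut-vertex-free partite set of every
bridge block whose two cut-vertices share a partite set, and no other
vertices. -/
def AssocSet (G : SimpleGraph V) (S : Set V) : Prop :=
  (∀ v, CutVtx G v → v ∈ S) ∧
  ∀ B V1 V2 : Set V, IsBlockSet G B → CompBipOn G B V1 V2 →
    ((V1.ncard = 1 ∧ V2.ncard = 1) → B ⊆ S) ∧
    (¬ (V1.ncard = 1 ∧ V2.ncard = 1) →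
      (((B ∩ cutSet G).ncard = 1) →
          (S ∩ (V1 \ cutSet G)).ncard = 1 ∧ (S ∩ (V2 \ cutSet G)).ncard = 1) ∧
      (((B ∩ cutSet G).ncard = 2) →
          (((V1 ∩ cutSet G).ncard = 2) →
              (S ∩ (V2 \ cutSet G)).ncard = 1 ∧ S ∩ (V1 \ cutSet G) = ∅) ∧
          (((V2 ∩ cutSet G).ncard = 2) →
              (S ∩ (V1 \ cutSet G)).ncard = 1 ∧ S ∩ (V2 \ cutSet G) = ∅) ∧
          (((V1 ∩ cutSet G).ncard = 1 ∧ (V2 ∩ cutSet G).ncard = 1) →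
              S ∩ (B \ cutSet G) = ∅)))

/-- The eccentricity of a vertex. -/
noncomputable def ecc (G : SimpleGraph V) (v : V) : ℕ := sSup (Set.range (G.dist v))

/-- The diameter of a graph. -/
noncomputable def gdiam (G : SimpleGraph V) : ℕ := sSup (Set.range (ecc G))

/-- The radius of a graph. -/
noncomputable def gradius (G : SimpleGraph V) : ℕ := sInf (Set.range (ecc G))

/-- The center of a graph: vertices of minimum eccentricity. -/
noncomputable def gcenter (G : SimpleGraph V) : Set V := {v | ecc G v = gradius G}

/-- The eccentricity matrix of `G`. -/
noncomputable def eccMatrix (G : SimpleGraph V) : Matrix V V ℝ := fun u v =>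
  if G.dist u v = min (ecc G u) (ecc G v) then (G.dist u v : ℝ) else 0

/-- The spectrum of the eccentricity matrix of `G` is symmetric with respect
to the origin: `μ` is an eigenvalue with multiplicity `l` iff `-μ` is. -/
def SpectrumSymm [Fintype V] [DecidableEq V] (G : SimpleGraph V) : Prop :=
  ∀ (hH : (eccMatrix G).IsHermitian) (μ : ℝ),
    {i | hH.eigenvalues i = μ}.ncard = {i | hH.eigenvalues i = -μ}.ncard

/-- A vertex is diametrically distinguished if it lies on some diametrical
path and is adjacent to some central vertex. -/
noncomputable def DiamDistinguished (G : SimpleGraph V) (u : V) : Prop :=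
  (∃ (a b : V) (p : G.Walk a b), p.IsPath ∧ p.length = G.dist a b ∧
      G.dist a b = gdiam G ∧ u ∈ p.support) ∧
  ∃ z ∈ gcenter G, G.Adj u z


/-!
Suppose that neither central vertex of `T_G = G[S]` is a cut-vertex of `G`, and let `z` be one
of them, lying in the complete bipartite block `B = K(X, Y)` with `z ∈ X`. The rules defining
`S` leave only three shapes for the neighbourhood of `z` in `T_G`: `z` is a leaf (and its
neighbour is then central as well), or `z` is adjacent to a leaf `a` and to the cut-vertex `c` of
the leaf block `B`, or `z` has exactly two neighbours, both cut-vertices of `B`, which `z`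
separates in `T_G`. In each shape a purely metric argument in `T_G`, using that the center has a
second vertex, puts a cut-vertex adjacent to a central vertex into the center.
-/

namespace SimpleGraph

section Eccentricity

variable {W : Type*} {H : SimpleGraph W}

lemma dist_le_ecc [Finite W] (v u : W) : H.dist v u ≤ ecc H v :=
  le_csSup (Set.finite_range _).bddAbove ⟨u, rfl⟩

lemma ecc_le_of_forall_dist_le {v : W} {m : ℕ} (h : ∀ u, H.dist v u ≤ m) : ecc H v ≤ m :=
  have : Nonempty W := ⟨v⟩
  csSup_le (Set.range_nonempty _) (Set.forall_mem_range.2 h)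

lemma mem_gcenter_of_ecc_le {v z : W} (hz : z ∈ gcenter H) (h : ecc H v ≤ ecc H z) :
    v ∈ gcenter H :=
  le_antisymm (h.trans_eq hz) (Nat.sInf_le ⟨v, rfl⟩)

lemma ecc_eq_of_mem_gcenter {v w : W} (hv : v ∈ gcenter H) (hw : w ∈ gcenter H) :
    ecc H v = ecc H w :=
  hv.trans hw.symm

end Eccentricity

section Separation

variable {W : Type*} {H : SimpleGraph W}

lemma dist_add_dist_le_of_forall_mem_support (hH : H.Connected) {v m u : W}
    (hm : ∀ p : H.Walk v u, m ∈ p.support) : H.dist v m + H.dist m u ≤ H.dist v u := by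
  classical
  obtain ⟨p, hp⟩ := hH.exists_walk_length_eq_dist v u
  calc H.dist v m + H.dist m u
      ≤ (p.takeUntil m (hm p)).length + (p.dropUntil m (hm p)).length :=
        add_le_add (dist_le _) (dist_le _)
    _ = H.dist v u := by rw [← Walk.length_append, Walk.take_spec, hp]

variable [Finite W]

lemma ecc_le_ecc_of_separates (hH : H.Connected) {K : Set W} {c z : W} (hzK : z ∈ K)
    (hcK : c ∉ K) (hK : ∀ x ∈ K, ∀ y, H.Adj x y → y ≠ c → y ∈ K)
    (hdist : ∀ u ∈ K, H.dist c u ≤ ecc H z) : ecc H c ≤ ecc H z := by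
  refine ecc_le_of_forall_dist_le fun u => ?_
  by_cases hu : u ∈ K
  · exact hdist u hu
  have hpass : ∀ p : H.Walk z u, c ∈ p.support := fun p => by
    obtain ⟨d, hd, hd₁, hd₂⟩ := p.exists_boundary_dart K hzK hu
    have hdc : d.snd = c := by_contra fun h => hd₂ (hK _ hd₁ _ d.adj h)
    exact hdc ▸ p.dart_snd_mem_support_of_mem_darts hd
  have := dist_add_dist_le_of_forall_mem_support hH hpass
  have := hH.pos_dist_of_ne (show z ≠ c from fun h => hcK (h ▸ hzK))
  have := dist_le_ecc (H := H) z u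
  omega

lemma mem_gcenter_of_forall_adj_eq (hH : H.Connected) {z c : W} (hzc : H.Adj z c)
    (hnbr : ∀ y, H.Adj z y → y = c) (hz : z ∈ gcenter H) : c ∈ gcenter H := by
  refine mem_gcenter_of_ecc_le hz (ecc_le_ecc_of_separates hH (K := {z}) rfl hzc.ne.symm
    (fun x hx y hxy hyc => absurd (hnbr y (hx ▸ hxy)) hyc) fun u hu => ?_)
  rw [hu, dist_comm, dist_eq_one_iff_adj.2 hzc, ← dist_eq_one_iff_adj.2 hzc]
  exact dist_le_ecc z c

/-- If `ecc z ≥ 2`, then `c` separates `{z, a}` from the rest of the graph; otherwise the second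
central vertex `w` is `a` or `c`, and `a` is too far from `c` to be central. -/
lemma mem_gcenter_of_leaf_adj (hH : H.Connected) {z a c w : W} (hza : H.Adj z a)
    (hzc : H.Adj z c) (hac : a ≠ c) (hnbr_z : ∀ y, H.Adj z y → y = a ∨ y = c)
    (hnbr_a : ∀ y, H.Adj a y → y = z) (hz : z ∈ gcenter H) (hw : w ∈ gcenter H)
    (hwz : w ≠ z) : c ∈ gcenter H := by
  have hnac : ¬ H.Adj a c := fun h => hzc.ne (hnbr_a c h).symm
  by_cases h2 : 2 ≤ ecc H z
  · refine mem_gcenter_of_ecc_le hz (ecc_le_ecc_of_separates hH (K := {z, a}) (by simp)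
      (by simp [hzc.ne.symm, hac.symm]) ?_ ?_)
    · rintro x (rfl | rfl) y hxy hyc
      · exact (hnbr_z y hxy).elim (fun h => Or.inr h) (fun h => absurd h hyc)
      · exact Or.inl (hnbr_a y hxy)
    · have hcz : H.dist c z = 1 := dist_eq_one_iff_adj.2 hzc.symm
      have hca : H.dist c a ≤ H.dist c z + H.dist z a := hH.dist_triangle
      rw [dist_eq_one_iff_adj.2 hza] at hca
      rintro u (rfl | rfl) <;> omega
  · have hwadj : H.Adj z w := by
      have := dist_le_ecc (H := H) z w
      have := hH.pos_dist_of_ne hwz.symm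
      exact dist_eq_one_iff_adj.1 (by omega)
    rcases hnbr_z w hwadj with rfl | rfl
    · have := hH.one_lt_dist_of_ne_of_not_adj hac hnac
      have := dist_le_ecc (H := H) w c
      rw [ecc_eq_of_mem_gcenter hw hz] at this
      omega
    · exact hw

end Separation

section Branches

variable {W : Type*} {H : SimpleGraph W}

def reachAvoiding (H : SimpleGraph W) (z d : W) : Set W :=
  {u | ∃ p : H.Walk d u, z ∉ p.support}

lemma mem_reachAvoiding_self {z d : W} (h : d ≠ z) : d ∈ H.reachAvoiding z d :=
  ⟨.nil, by simpa using h.symm⟩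

lemma mem_reachAvoiding_of_walk {z d u v : W} (hu : u ∈ H.reachAvoiding z d)
    (q : H.Walk u v) (hq : z ∉ q.support) : v ∈ H.reachAvoiding z d := by
  obtain ⟨p, hp⟩ := hu
  refine ⟨p.append q, fun h => ?_⟩
  rw [Walk.mem_support_append_iff] at h
  exact h.elim hp hq

lemma ne_of_mem_reachAvoiding {z d u : W} (hu : u ∈ H.reachAvoiding z d) : u ≠ z := by
  rintro rfl
  obtain ⟨p, hp⟩ := hu
  exact hp p.end_mem_support

lemma mem_reachAvoiding_of_adj {z d u v : W} (hu : u ∈ H.reachAvoiding z d) (huv : H.Adj u v)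
    (hv : v ≠ z) : v ∈ H.reachAvoiding z d :=
  mem_reachAvoiding_of_walk hu huv.toWalk
    (by simp [(ne_of_mem_reachAvoiding hu).symm, hv.symm])

lemma mem_reachAvoiding_symm {z d u : W} (hu : u ∈ H.reachAvoiding z d) :
    d ∈ H.reachAvoiding z u := by
  obtain ⟨p, hp⟩ := hu
  exact ⟨p.reverse, by simpa using hp⟩

lemma dist_add_dist_le_of_notMem_reachAvoiding (hH : H.Connected) {z d v u : W}
    (hv : v ∈ H.reachAvoiding z d) (hu : u ∉ H.reachAvoiding z d) :
    H.dist v z + H.dist z u ≤ H.dist v u :=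
  dist_add_dist_le_of_forall_mem_support hH fun q =>
    by_contra fun hq => hu (mem_reachAvoiding_of_walk hv q hq)

variable [Finite W]

lemma ecc_le_ecc_of_shallow_branch (hH : H.Connected) {z d c : W} (hzc : H.Adj z c)
    (hnbr : ∀ y, H.Adj z y → y = d ∨ y = c) (hc : c ∉ H.reachAvoiding z d)
    (hshallow : ∀ u ∈ H.reachAvoiding z d, H.dist z u < ecc H z) : ecc H c ≤ ecc H z := by
  have hcz : H.dist c z = 1 := dist_eq_one_iff_adj.2 hzc.symm
  refine ecc_le_ecc_of_separates hH (K := insert z (H.reachAvoiding z d)) (Set.mem_insert _ _)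
    (by simp [hzc.ne.symm, hc]) ?_ ?_
  · rintro x (rfl | hx) y hxy hyc
    · obtain rfl := (hnbr y hxy).resolve_right hyc
      exact Or.inr (mem_reachAvoiding_self hxy.ne.symm)
    · by_cases hyz : y = z
      · exact Or.inl hyz
      · exact Or.inr (mem_reachAvoiding_of_adj hx hxy hyz)
  · rintro u (rfl | hu)
    · rw [hcz, ← dist_eq_one_iff_adj.2 hzc]
      exact dist_le_ecc _ _
    · have := hshallow u hu
      have : H.dist c u ≤ H.dist c z + H.dist z u := hH.dist_triangle
      omega

/-- Either some branch of `H - z` contains no vertex at distance `ecc z` from `z`, and then the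
neighbour in the other branch is central, or every vertex `w ≠ z` is farther than `ecc z` from
a deepest vertex of the branch not containing `w`. -/
lemma mem_gcenter_of_two_branches (hH : H.Connected) {z w c₁ c₂ : W}
    (h₁ : H.Adj z c₁) (h₂ : H.Adj z c₂) (hnbr : ∀ y, H.Adj z y → y = c₁ ∨ y = c₂)
    (hsep : ∀ p : H.Walk c₁ c₂, z ∈ p.support)
    (hz : z ∈ gcenter H) (hw : w ∈ gcenter H) (hwz : w ≠ z) :
    c₁ ∈ gcenter H ∨ c₂ ∈ gcenter H := by
  set R := H.reachAvoiding z
  have hc₂ : c₂ ∉ R c₁ := fun ⟨p, hp⟩ => hp (hsep p)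
  have hdisj : ∀ u ∈ R c₁, u ∉ R c₂ := fun u hu₁ hu₂ => by
    obtain ⟨q, hq⟩ := mem_reachAvoiding_symm hu₂
    exact hc₂ (mem_reachAvoiding_of_walk hu₁ q hq)
  have hcover : ∀ u ≠ z, u ∈ R c₁ ∨ u ∈ R c₂ := fun u hu => by
    obtain ⟨p, hp, -⟩ := hH.exists_path_of_dist z u
    cases p with
    | nil => exact absurd rfl hu
    | cons hzm q =>
      rw [Walk.cons_isPath_iff] at hp
      rcases hnbr _ hzm with rfl | rfl
      exacts [Or.inl ⟨q, hp.2⟩, Or.inr ⟨q, hp.2⟩]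
  by_cases hshallow₁ : ∀ u ∈ R c₁, H.dist z u < ecc H z
  · exact Or.inr (mem_gcenter_of_ecc_le hz (ecc_le_ecc_of_shallow_branch hH h₂ hnbr hc₂
      hshallow₁))
  by_cases hshallow₂ : ∀ u ∈ R c₂, H.dist z u < ecc H z
  · exact Or.inl (mem_gcenter_of_ecc_le hz (ecc_le_ecc_of_shallow_branch hH h₁
      (fun y hy => (hnbr y hy).symm) (hdisj c₁ (mem_reachAvoiding_self h₁.ne.symm))
      hshallow₂))
  push Not at hshallow₁ hshallow₂
  obtain ⟨u₁, hu₁, hd₁⟩ := hshallow₁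
  obtain ⟨u₂, hu₂, hd₂⟩ := hshallow₂
  have hfar : ∀ d u, w ∈ R d → u ∉ R d → ecc H z ≤ H.dist z u → False := by
    intro d u hwd hud hzu
    have := dist_add_dist_le_of_notMem_reachAvoiding hH hwd hud
    have := hH.pos_dist_of_ne hwz
    have := dist_le_ecc (H := H) w u
    rw [ecc_eq_of_mem_gcenter hw hz] at this
    omega
  rcases hcover w hwz with hw₁ | hw₂
  · exact (hfar _ _ hw₁ (fun h => hdisj u₂ h hu₂) hd₂).elim
  · exact (hfar _ _ hw₂ (hdisj u₁ hu₁) hd₁).elim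

end Branches

end SimpleGraph

section Blocks

variable {G : SimpleGraph V}

noncomputable def SimpleGraph.induceInduceIso (G : SimpleGraph V) (A : Set V) (C : Set A) :
    (G.induce A).induce C ≃g G.induce (Subtype.val '' C) where
  toEquiv := Equiv.Set.image Subtype.val C Subtype.val_injective
  map_rel_iff' := Iff.rfl

lemma noCutVtx_induce_iff {B : Set V} :
    NoCutVtx (G.induce B) ↔
      (G.induce B).Connected ∧ ∀ w ∈ B, (G.induce (B \ {w})).Connected := by
  refine and_congr_right fun _ => Subtype.forall.trans (forall₂_congr fun w hw => ?_)
  rw [(G.induceInduceIso B _).connected_iff, Set.image_val_compl, Set.image_singleton]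

lemma NoCutVtx.connected_induce_diff {B : Set V} (hB : NoCutVtx (G.induce B)) (w : V) :
    (G.induce (B \ {w})).Connected := by
  by_cases hw : w ∈ B
  · exact (noCutVtx_induce_iff.1 hB).2 w hw
  · rw [Set.sdiff_singleton_eq_self hw]
    exact hB.1

lemma SimpleGraph.Walk.IsPath.notMem_takeUntil_or_notMem_dropUntil [DecidableEq V] {a b : V}
    {p : G.Walk a b} (hp : p.IsPath) {y x : V} (hy : y ∈ p.support) (hxy : x ≠ y) :
    x ∉ (p.takeUntil y hy).support ∨ x ∉ (p.dropUntil y hy).support := by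
  by_contra! h
  have hnd := hp.support_nodup
  rw [← p.take_spec hy, Walk.support_append] at hnd
  have hx := h.2
  rw [← Walk.cons_tail_support] at hx
  exact List.disjoint_of_nodup_append hnd h.1 ((List.mem_cons.1 hx).resolve_left hxy)

/-- After deleting any vertex `w`, each vertex of the path still reaches an end of the path, and
hence `B`, avoiding `w`. -/
lemma NoCutVtx.union_support {B : Set V} (hB : NoCutVtx (G.induce B)) {a b : V}
    {p : G.Walk a b} (hp : p.IsPath) (ha : a ∈ B) (hb : b ∈ B) :
    NoCutVtx (G.induce (B ∪ {x | x ∈ p.support})) := by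
  classical
  refine noCutVtx_induce_iff.2 ⟨induce_union_connected hB.1.preconnected
    p.connected_induce_support.preconnected ⟨a, ha, p.start_mem_support⟩, fun w _ => ?_⟩
  set U := B ∪ {x | x ∈ p.support}
  have hBw := hB.connected_induce_diff w
  obtain ⟨⟨h, hh⟩⟩ := hBw.nonempty
  have hsub : B \ {w} ⊆ U \ {w} := Set.sdiff_subset_sdiff_left Set.subset_union_left
  have patch : ∀ {v} (s : Set V), (G.induce s).Connected → s ⊆ {x | x ∈ p.support} →
      w ∉ s → (s ∩ B).Nonempty → v ∈ s → ∃ s' ⊆ U \ {w}, ∃ (hh' : h ∈ s') (hv' : v ∈ s'),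
        (G.induce s').Reachable ⟨h, hh'⟩ ⟨v, hv'⟩ := by
    rintro v s hs hsp hws ⟨e, hes, heB⟩ hv
    refine ⟨(B \ {w}) ∪ s, Set.union_subset hsub fun x hx =>
      ⟨Or.inr (hsp hx), fun hxw => hws (hxw ▸ hx)⟩, Or.inl hh, Or.inr hv, ?_⟩
    exact induce_union_connected hBw.preconnected hs.preconnected
      ⟨e, ⟨heB, fun hew => hws (hew ▸ hes)⟩, hes⟩ _ _
  refine induce_connected_of_patches h (hsub hh) fun {v} hv => ?_
  obtain ⟨hvB | hvp, hvw⟩ := hv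
  · exact ⟨B \ {w}, hsub, hh, ⟨hvB, hvw⟩, hBw _ _⟩
  rcases hp.notMem_takeUntil_or_notMem_dropUntil hvp (Ne.symm hvw) with ht | hd
  · exact patch _ (p.takeUntil v hvp).connected_induce_support
      (fun x hx => p.support_takeUntil_subset_support hvp hx) ht
      ⟨a, (p.takeUntil v hvp).start_mem_support, ha⟩ (p.takeUntil v hvp).end_mem_support
  · exact patch _ (p.dropUntil v hvp).connected_induce_support
      (fun x hx => p.support_dropUntil_subset_support hvp hx) hd
      ⟨b, (p.dropUntil v hvp).end_mem_support, hb⟩ (p.dropUntil v hvp).start_mem_support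

lemma IsBlockSet.support_subset {B : Set V} (hB : IsBlockSet G B) {a b : V} {p : G.Walk a b}
    (hp : p.IsPath) (ha : a ∈ B) (hb : b ∈ B) : {x | x ∈ p.support} ⊆ B :=
  Set.union_eq_left.1 (hB.2 _ Set.subset_union_left (hB.1.union_support hp ha hb)).symm

lemma IsBlockSet.mem_of_adj {B : Set V} (hB : IsBlockSet G B) {v y : V} (hv : v ∈ B)
    (hvc : ¬ CutVtx G v) (hvy : G.Adj v y) : y ∈ B := by
  classical
  obtain ⟨⟨b, hbB, hbv⟩⟩ := (hB.1.connected_induce_diff v).nonempty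
  obtain ⟨q⟩ := (not_not.1 hvc : (G.induce {v}ᶜ).Connected) ⟨y, hvy.ne.symm⟩ ⟨b, hbv⟩
  set q' := (q.map (Embedding.induce _).toHom).bypass
  have hvq' : v ∉ q'.support := fun h => by
    have h' := Walk.support_bypass_subset_support _ h
    rw [Walk.support_map, List.mem_map] at h'
    obtain ⟨u, -, hu⟩ := h'
    exact u.2 hu
  have hp : (Walk.cons hvy q').IsPath := (Walk.cons_isPath_iff _ _).2 ⟨Walk.bypass_isPath _, hvq'⟩
  exact hB.support_subset hp hv hbB (List.mem_cons_of_mem v q'.start_mem_support)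

lemma IsBlockSet.exists_cutVtx {B : Set V} (hB : IsBlockSet G B) (hG : G.Connected) {x : V}
    (hx : x ∉ B) : ∃ c ∈ B, CutVtx G c := by
  obtain ⟨⟨v, hv⟩⟩ := hB.1.1.nonempty
  obtain ⟨p⟩ := hG.preconnected v x
  obtain ⟨d, -, hd₁, hd₂⟩ := p.exists_boundary_dart B hv hx
  exact ⟨d.fst, hd₁, by_contra fun hc => hd₂ (hB.mem_of_adj hd₁ hc d.adj)⟩

lemma exists_isBlockSet_of_adj [Finite V] {x y : V} (hxy : G.Adj x y) :
    ∃ B, IsBlockSet G B ∧ x ∈ B ∧ y ∈ B := by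
  have hpair : NoCutVtx (G.induce {x, y}) := by
    refine noCutVtx_induce_iff.2 ⟨induce_pair_connected_of_adj hxy, ?_⟩
    rintro w (rfl | rfl)
    · rw [Set.pair_sdiff_left hxy.ne, induce_singleton_eq_top]
      exact connected_top
    · rw [Set.pair_sdiff_right hxy.ne, induce_singleton_eq_top]
      exact connected_top
  obtain ⟨B, ⟨hxyB, hB⟩, hmax⟩ :=
    (Set.toFinite {C : Set V | {x, y} ⊆ C ∧ NoCutVtx (G.induce C)}).exists_maximal
      ⟨_, subset_rfl, hpair⟩
  exact ⟨B, ⟨hB, fun C hBC hC => le_antisymm hBC (hmax ⟨hxyB.trans hBC, hC⟩ hBC)⟩,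
    hxyB (by simp), hxyB (by simp)⟩

end Blocks

namespace CompBipOn

variable {G : SimpleGraph V} {B V₁ V₂ : Set V}

lemma symm (h : CompBipOn G B V₁ V₂) : CompBipOn G B V₂ V₁ :=
  ⟨h.2.1, h.1, h.2.2.1.symm, Set.union_comm V₂ V₁ ▸ h.2.2.2.1,
    fun x hx y hy => (h.2.2.2.2 x hx y hy).trans or_comm⟩

lemma left_subset (h : CompBipOn G B V₁ V₂) : V₁ ⊆ B :=
  h.2.2.2.1 ▸ Set.subset_union_left

lemma notMem_right (h : CompBipOn G B V₁ V₂) {x : V} (hx : x ∈ V₁) : x ∉ V₂ :=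
  Set.disjoint_left.1 h.2.2.1 hx

lemma mem_or (h : CompBipOn G B V₁ V₂) {x : V} (hx : x ∈ B) : x ∈ V₁ ∨ x ∈ V₂ := by
  rwa [← h.2.2.2.1] at hx

lemma adj (h : CompBipOn G B V₁ V₂) {x y : V} (hx : x ∈ V₁) (hy : y ∈ V₂) : G.Adj x y :=
  (h.2.2.2.2 x (h.left_subset hx) y (h.symm.left_subset hy)).2 (Or.inl ⟨hx, hy⟩)

lemma mem_right_of_adj (h : CompBipOn G B V₁ V₂) {x y : V} (hx : x ∈ V₁) (hy : y ∈ B)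
    (hxy : G.Adj x y) : y ∈ V₂ := by
  rcases (h.2.2.2.2 x (h.left_subset hx) y hy).1 hxy with ⟨-, hy₂⟩ | ⟨hx₂, -⟩
  exacts [hy₂, absurd hx₂ (h.notMem_right hx)]

lemma ncard_inter [Finite V] (h : CompBipOn G B V₁ V₂) (K : Set V) :
    (B ∩ K).ncard = (V₁ ∩ K).ncard + (V₂ ∩ K).ncard := by
  rw [← h.2.2.2.1, Set.union_inter_distrib_right]
  exact Set.ncard_union_eq (h.2.2.1.mono Set.inter_subset_left Set.inter_subset_left)

end CompBipOn

lemma IsBlockSet.adj_iff {G : SimpleGraph V} {B V₁ V₂ : Set V} (hB : IsBlockSet G B)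
    (hbp : CompBipOn G B V₁ V₂) {z y : V} (hz : z ∈ V₁) (hzc : ¬ CutVtx G z) :
    G.Adj z y ↔ y ∈ V₂ :=
  ⟨fun h => hbp.mem_right_of_adj hz (hB.mem_of_adj (hbp.left_subset hz) hzc h) h, hbp.adj hz⟩

namespace ClassB

variable {G : SimpleGraph V} {B : Set V}

lemma exists_cutVtx (hG : ClassB G) (hB : IsBlockSet G B) : ∃ c ∈ B, CutVtx G c := by
  obtain ⟨B₁, B₂, h₁, h₂, h₁₂⟩ := hG.2.1
  have hx : ∃ x, x ∉ B := by
    by_contra! hall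
    have hsub : ∀ B', IsBlockSet G B' → B' = B := fun B' hB' =>
      hB'.2 B (fun x _ => hall x) hB.1
    exact h₁₂ ((hsub B₁ h₁).trans (hsub B₂ h₂).symm)
  obtain ⟨x, hx⟩ := hx
  exact hB.exists_cutVtx hG.1.1 hx

lemma ncard_inter_cutSet_eq_one_or_two [Finite V] (hG : ClassB G) (hB : IsBlockSet G B) :
    (B ∩ cutSet G).ncard = 1 ∨ (B ∩ cutSet G).ncard = 2 := by
  obtain ⟨c, hcB, hc⟩ := hG.exists_cutVtx hB
  have := (Set.ncard_pos (s := B ∩ cutSet G)).2 ⟨c, hcB, hc⟩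
  have := hG.2.2 B hB
  omega

end ClassB

namespace AssocSet

variable [Finite V] {G : SimpleGraph V} {S B V₁ V₂ X Y : Set V}

lemma inter_nonempty (hG : ClassB G) (hS : AssocSet G S) (hB : IsBlockSet G B)
    (hbp : CompBipOn G B V₁ V₂) : (S ∩ V₁).Nonempty := by
  by_cases hK : V₁.ncard = 1 ∧ V₂.ncard = 1
  · obtain ⟨x, hx⟩ := hbp.1
    exact ⟨x, (hS.2 B V₁ V₂ hB hbp).1 hK (hbp.left_subset hx), hx⟩
  by_cases hcut : (V₁ ∩ cutSet G).Nonempty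
  · obtain ⟨x, hx, hxc⟩ := hcut
    exact ⟨x, hS.1 x hxc, hx⟩
  have h₀ : (V₁ ∩ cutSet G).ncard = 0 := by
    rw [Set.not_nonempty_iff_eq_empty.1 hcut, Set.ncard_empty]
  have hrule := (hS.2 B V₁ V₂ hB hbp).2 hK
  have hone : (S ∩ (V₁ \ cutSet G)).ncard = 1 := by
    have := hbp.ncard_inter (cutSet G)
    rcases hG.ncard_inter_cutSet_eq_one_or_two hB with hk | hk
    · exact (hrule.1 hk).1
    · exact ((hrule.2 hk).2.1 (by omega)).1
  obtain ⟨x, hx, hx₁, -⟩ := Set.nonempty_of_ncard_ne_zero (hone ▸ one_ne_zero)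
  exact ⟨x, hx, hx₁⟩

lemma reachable_of_mem (hG : ClassB G) (hS : AssocSet G S) (hB : IsBlockSet G B) {s t : S}
    (hs : s.1 ∈ B) (ht : t.1 ∈ B) : (G.induce S).Reachable s t := by
  obtain ⟨V₁, V₂, hbp⟩ := hG.1.2 B hB
  have hsame : ∀ {W₁ W₂}, CompBipOn G B W₁ W₂ → s.1 ∈ W₁ → t.1 ∈ W₁ →
      (G.induce S).Reachable s t := fun hbp' hs₁ ht₁ => by
    obtain ⟨m, hmS, hm₂⟩ := hS.inter_nonempty hG hB hbp'.symm
    exact (induce_adj.2 (hbp'.adj hs₁ hm₂) : (G.induce S).Adj s ⟨m, hmS⟩).reachable.trans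
      (induce_adj.2 (hbp'.adj ht₁ hm₂) : (G.induce S).Adj t ⟨m, hmS⟩).reachable.symm
  rcases hbp.mem_or hs with hs₁ | hs₂ <;> rcases hbp.mem_or ht with ht₁ | ht₂
  · exact hsame hbp hs₁ ht₁
  · exact (induce_adj.2 (hbp.adj hs₁ ht₂) : (G.induce S).Adj s t).reachable
  · exact (induce_adj.2 (hbp.adj ht₁ hs₂) : (G.induce S).Adj t s).reachable.symm
  · exact hsame hbp.symm hs₂ ht₂

/-- Along a `G`-walk, consecutive blocks are linked in `G[S]` either through a shared vertex
of `S` or, at a vertex outside `S` (which is not a cut-vertex), by being the same block. -/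
lemma induce_connected (hG : ClassB G) (hS : AssocSet G S) : (G.induce S).Connected := by
  have key : ∀ {x t : V} (p : G.Walk x t) (ht : t ∈ S) {B}, IsBlockSet G B → x ∈ B →
      ∀ s : S, s.1 ∈ B → (G.induce S).Reachable s ⟨t, ht⟩ := by
    intro x t p
    induction p with
    | nil => exact fun ht B hB hx s hs => hS.reachable_of_mem hG hB hs hx
    | @cons x x' t hxx' q ih =>
      intro ht B hB hx s hs
      obtain ⟨B', hB', hxB', hx'B'⟩ := exists_isBlockSet_of_adj hxx'
      by_cases hxS : x ∈ S
      · exact (hS.reachable_of_mem hG hB (t := ⟨x, hxS⟩) hs hx).trans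
          (ih ht hB' hx'B' ⟨x, hxS⟩ hxB')
      · exact ih ht hB (hB.mem_of_adj hx (fun hc => hxS (hS.1 x hc)) hxx') s hs
  obtain ⟨B₀, -, hB₀, -⟩ := hG.2.1
  obtain ⟨c, hcB₀, hc⟩ := hG.exists_cutVtx hB₀
  refine (connected_iff_exists_forall_reachable _).2 ⟨⟨c, hS.1 c hc⟩, fun t => ?_⟩
  obtain ⟨p⟩ := hG.1.1.preconnected c t
  exact key p t.2 hB₀ hcB₀ ⟨c, hS.1 c hc⟩ hcB₀


lemma exists_cutVtx_mem_gcenter_of_ncard_eq_one (hG : ClassB G) (hS : AssocSet G S)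
    (hB : IsBlockSet G B) (hbp : CompBipOn G B X Y) (hK : X.ncard = 1 ∧ Y.ncard = 1) {z : S}
    (hzX : z.1 ∈ X) (hzc : ¬ CutVtx G z) (hz : z ∈ gcenter (G.induce S)) :
    ∃ c : S, c ∈ gcenter (G.induce S) ∧ CutVtx G c := by
  obtain ⟨c, hcB, hc⟩ := hG.exists_cutVtx hB
  have hcY : c ∈ Y := (hbp.mem_or hcB).resolve_left fun hcX =>
    hzc ((Set.ncard_le_one_iff (Set.toFinite _)).1 hK.1.le hcX hzX ▸ hc)
  refine ⟨⟨c, hS.1 c hc⟩, mem_gcenter_of_forall_adj_eq (hS.induce_connected hG)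
    (hbp.adj hzX hcY) (fun y hy => Subtype.ext ?_) hz, hc⟩
  exact (Set.ncard_le_one_iff (Set.toFinite _)).1 hK.2.le ((hB.adj_iff hbp hzX hzc).1 hy) hcY

lemma exists_cutVtx_mem_gcenter_of_leaf (hG : ClassB G) (hS : AssocSet G S)
    (hB : IsBlockSet G B) (hbp : CompBipOn G B X Y) (hK : ¬ (X.ncard = 1 ∧ Y.ncard = 1))
    {c : V} (hcut : B ∩ cutSet G = {c}) (hcY : c ∈ Y) {p w : S} (hpX : p.1 ∈ X)
    (hp : p ∈ gcenter (G.induce S)) (hw : w ∈ gcenter (G.induce S)) (hwp : w ≠ p) :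
    ∃ c : S, c ∈ gcenter (G.induce S) ∧ CutVtx G c := by
  have hc : CutVtx G c := (hcut ▸ Set.mem_singleton c : c ∈ B ∩ cutSet G).2
  have hXc : ∀ x ∈ X, ¬ CutVtx G x := fun x hx hxc => by
    have : x ∈ B ∩ cutSet G := ⟨hbp.left_subset hx, hxc⟩
    rw [hcut, Set.mem_singleton_iff] at this
    exact hbp.notMem_right hx (this ▸ hcY)
  have hrule := ((hS.2 B X Y hB hbp).2 hK).1 (by rw [hcut, Set.ncard_singleton])
  obtain ⟨a, ha⟩ := Set.ncard_eq_one.1 hrule.2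
  have haS : a ∈ S ∩ (Y \ cutSet G) := ha ▸ Set.mem_singleton a
  have hnbr_p : ∀ y : S, (G.induce S).Adj p y → y = ⟨a, haS.1⟩ ∨ y = ⟨c, hS.1 c hc⟩ := by
    intro y hy
    have hyY := (hB.adj_iff hbp hpX (hXc _ hpX)).1 hy
    by_cases hyc : CutVtx G y
    · have : y.1 ∈ B ∩ cutSet G := ⟨hbp.symm.left_subset hyY, hyc⟩
      rw [hcut] at this
      exact Or.inr (Subtype.ext this)
    · have : y.1 ∈ S ∩ (Y \ cutSet G) := ⟨y.2, hyY, hyc⟩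
      rw [ha] at this
      exact Or.inl (Subtype.ext this)
  have hnbr_a : ∀ y : S, (G.induce S).Adj ⟨a, haS.1⟩ y → y = p := fun y hy => by
    have hyX := (hB.adj_iff hbp.symm haS.2.1 haS.2.2).1 hy
    exact Subtype.ext ((Set.ncard_le_one_iff (Set.toFinite _)).1 hrule.1.le ⟨y.2, hyX, hXc _ hyX⟩
      ⟨p.2, hpX, hXc _ hpX⟩)
  refine ⟨_, mem_gcenter_of_leaf_adj (hS.induce_connected hG) (hbp.adj hpX haS.2.1)
    (hbp.adj hpX hcY) (fun h => haS.2.2 (by rw [Subtype.mk.inj h]; exact hc)) hnbr_p hnbr_a hp hw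
    hwp, hc⟩

/-- `z` hangs at the representative `a` of `Y`, which is then central and sees `c` from the
other side of the leaf block. -/
lemma exists_cutVtx_mem_gcenter_of_leaf_of_mem_cut_side (hG : ClassB G) (hS : AssocSet G S)
    (hB : IsBlockSet G B) (hbp : CompBipOn G B X Y) (hK : ¬ (X.ncard = 1 ∧ Y.ncard = 1))
    {c : V} (hcut : B ∩ cutSet G = {c}) (hcX : c ∈ X) {z : S} (hzX : z.1 ∈ X)
    (hzc : ¬ CutVtx G z) (hz : z ∈ gcenter (G.induce S)) :
    ∃ c : S, c ∈ gcenter (G.induce S) ∧ CutVtx G c := by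
  have hrule := ((hS.2 B X Y hB hbp).2 hK).1 (by rw [hcut, Set.ncard_singleton])
  obtain ⟨a, ha⟩ := Set.ncard_eq_one.1 hrule.2
  have haS : a ∈ S ∩ (Y \ cutSet G) := ha ▸ Set.mem_singleton a
  have hnbr : ∀ y : S, (G.induce S).Adj z y → y = ⟨a, haS.1⟩ := fun y hy => by
    have hyY := (hB.adj_iff hbp hzX hzc).1 hy
    have hyc : ¬ CutVtx G y := fun hyc => by
      have : y.1 ∈ B ∩ cutSet G := ⟨hbp.symm.left_subset hyY, hyc⟩
      rw [hcut, Set.mem_singleton_iff] at this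
      exact hbp.notMem_right hcX (this ▸ hyY)
    have : y.1 ∈ S ∩ (Y \ cutSet G) := ⟨y.2, hyY, hyc⟩
    rw [ha] at this
    exact Subtype.ext this
  have hza := hbp.adj hzX haS.2.1
  exact exists_cutVtx_mem_gcenter_of_leaf hG hS hB hbp.symm (fun h => hK h.symm) hcut hcX
    (p := ⟨a, haS.1⟩) haS.2.1
    (mem_gcenter_of_forall_adj_eq (hS.induce_connected hG) hza hnbr hz) hz
    (fun h => hza.ne (congrArg Subtype.val h))

lemma exists_cutVtx_mem_gcenter_of_ncard_right_eq_two (hG : ClassB G) (hS : AssocSet G S)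
    (hB : IsBlockSet G B) (hbp : CompBipOn G B X Y) (hK : ¬ (X.ncard = 1 ∧ Y.ncard = 1))
    (hk : (B ∩ cutSet G).ncard = 2) (hY : (Y ∩ cutSet G).ncard = 2) {z w : S} (hzX : z.1 ∈ X)
    (hz : z ∈ gcenter (G.induce S)) (hw : w ∈ gcenter (G.induce S)) (hwz : w ≠ z) :
    ∃ c : S, c ∈ gcenter (G.induce S) ∧ CutVtx G c := by
  have hrule := (((hS.2 B X Y hB hbp).2 hK).2 hk).2.1 hY
  obtain ⟨c₁, c₂, hc₁₂, hc⟩ := Set.ncard_eq_two.1 hY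
  have hc₁ : c₁ ∈ Y ∩ cutSet G := hc ▸ Set.mem_insert _ _
  have hc₂ : c₂ ∈ Y ∩ cutSet G := hc ▸ Set.mem_insert_of_mem _ rfl
  have hXc : X ∩ cutSet G = ∅ := by
    have := hbp.ncard_inter (cutSet G)
    exact (Set.ncard_eq_zero (Set.toFinite _)).1 (by omega)
  have hSX : ∀ y : S, y.1 ∈ X → y = z := fun y hy =>
    have hcut : ∀ x ∈ X, ¬ CutVtx G x := fun x hx hxc => hXc.subset ⟨hx, hxc⟩
    Subtype.ext ((Set.ncard_le_one_iff (Set.toFinite _)).1 hrule.1.le ⟨y.2, hy, hcut _ hy⟩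
      ⟨z.2, hzX, hcut _ hzX⟩)
  have hSY : ∀ y : S, y.1 ∈ Y → y = ⟨c₁, hS.1 _ hc₁.2⟩ ∨ y = ⟨c₂, hS.1 _ hc₂.2⟩ := by
    intro y hy
    by_cases hyc : CutVtx G y
    · have : y.1 ∈ Y ∩ cutSet G := ⟨hy, hyc⟩
      rw [hc] at this
      exact this.imp Subtype.ext Subtype.ext
    · exact absurd (hrule.2 ▸ ⟨y.2, hy, hyc⟩ : y.1 ∈ (∅ : Set V)) id
  have hzc : ¬ CutVtx G z := fun h => hXc.subset ⟨hzX, h⟩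
  -- a `c₁`–`c₂` path in `G` stays in the block `B`, so its second vertex lies in `X`, where the
  -- only vertex of `S` is `z`
  have hsep : ∀ q : (G.induce S).Walk ⟨c₁, hS.1 _ hc₁.2⟩ ⟨c₂, hS.1 _ hc₂.2⟩, z ∈ q.support := by
    intro q
    classical
    set p := (q.map (Embedding.induce S).toHom).bypass
    obtain ⟨m, hm, rest, hp⟩ := Walk.exists_eq_cons_of_ne hc₁₂ p
    have hmp : m ∈ p.support := by
      rw [hp]
      exact List.mem_cons_of_mem _ rest.start_mem_support
    have hmX : m ∈ X := hbp.symm.mem_right_of_adj hc₁.1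
      (hB.support_subset (Walk.bypass_isPath _) (hbp.symm.left_subset hc₁.1)
        (hbp.symm.left_subset hc₂.1) hmp) hm
    have hmq := Walk.support_bypass_subset_support _ hmp
    rw [Walk.support_map, List.mem_map] at hmq
    obtain ⟨u, hu, rfl⟩ := hmq
    exact hSX u hmX ▸ hu
  rcases mem_gcenter_of_two_branches (hS.induce_connected hG) (hbp.adj hzX hc₁.1)
    (hbp.adj hzX hc₂.1) (fun y hy => hSY y ((hB.adj_iff hbp hzX hzc).1 hy)) hsep hz hw hwz
    with h | h
  exacts [⟨_, h, hc₁.2⟩, ⟨_, h, hc₂.2⟩]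

lemma exists_cutVtx_mem_gcenter_of_mem_left (hG : ClassB G) (hS : AssocSet G S)
    (hB : IsBlockSet G B) (hbp : CompBipOn G B X Y) {z w : S} (hzX : z.1 ∈ X)
    (hzc : ¬ CutVtx G z) (hz : z ∈ gcenter (G.induce S)) (hw : w ∈ gcenter (G.induce S))
    (hwz : w ≠ z) : ∃ c : S, c ∈ gcenter (G.induce S) ∧ CutVtx G c := by
  by_cases hK : X.ncard = 1 ∧ Y.ncard = 1
  · exact exists_cutVtx_mem_gcenter_of_ncard_eq_one hG hS hB hbp hK hzX hzc hz
  have hrule := (hS.2 B X Y hB hbp).2 hK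
  have hsplit := hbp.ncard_inter (cutSet G)
  rcases hG.ncard_inter_cutSet_eq_one_or_two hB with hk | hk
  · obtain ⟨c, hc⟩ := Set.ncard_eq_one.1 hk
    have hcB : c ∈ B ∩ cutSet G := hc ▸ Set.mem_singleton c
    rcases hbp.mem_or hcB.1 with hcX | hcY
    · exact exists_cutVtx_mem_gcenter_of_leaf_of_mem_cut_side hG hS hB hbp hK hc hcX hzX hzc hz
    · exact exists_cutVtx_mem_gcenter_of_leaf hG hS hB hbp hK hc hcY hzX hz hw hwz
  · rcases (by omega : (X ∩ cutSet G).ncard = 0 ∨ (X ∩ cutSet G).ncard = 1 ∨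
        (X ∩ cutSet G).ncard = 2) with h₀ | h₁ | h₂
    · exact exists_cutVtx_mem_gcenter_of_ncard_right_eq_two hG hS hB hbp hK hk (by omega) hzX
        hz hw hwz
    · have := (hrule.2 hk).2.2 ⟨h₁, by omega⟩
      exact absurd (this ▸ ⟨z.2, hbp.left_subset hzX, hzc⟩ : z.1 ∈ (∅ : Set V)) id
    · exact absurd (((hrule.2 hk).1 h₂).2 ▸ ⟨z.2, hzX, hzc⟩ : z.1 ∈ (∅ : Set V)) id

theorem exists_cutVtx_mem_gcenter (hG : ClassB G) (hS : AssocSet G S) {z w : S}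
    (hz : z ∈ gcenter (G.induce S)) (hw : w ∈ gcenter (G.induce S)) (hwz : w ≠ z)
    (hzc : ¬ CutVtx G z) : ∃ c : S, c ∈ gcenter (G.induce S) ∧ CutVtx G c := by
  have : Nontrivial V := ⟨⟨z, w, fun h => hwz (Subtype.ext h).symm⟩⟩
  obtain ⟨y, hzy⟩ := hG.1.1.preconnected.exists_adj_of_nontrivial z.1
  obtain ⟨B, hB, hzB, -⟩ := exists_isBlockSet_of_adj hzy
  obtain ⟨X, Y, hbp⟩ := hG.1.2 B hB
  rcases hbp.mem_or hzB with hzX | hzY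
  · exact exists_cutVtx_mem_gcenter_of_mem_left hG hS hB hbp hzX hzc hz hw hwz
  · exact exists_cutVtx_mem_gcenter_of_mem_left hG hS hB hbp.symm hzY hzc hz hw hwz

end AssocSet

theorem stmt_11_general {V : Type*} [Fintype V] (G : SimpleGraph V) (hG : ClassB G)
    (S : Set V) (hS : AssocSet G S)
    (z1 z2 : S) (hne : z1 ≠ z2) (hc : gcenter (G.induce S) = {z1, z2}) :
    CutVtx G z1.1 ∨ CutVtx G z2.1 := by
  by_contra! h
  obtain ⟨c, hcen, hcut⟩ := hS.exists_cutVtx_mem_gcenter hG (z := z1) (w := z2) (by simp [hc])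
    (by simp [hc]) hne.symm h.1
  rw [hc] at hcen
  rcases hcen with rfl | rfl
  exacts [h.1 hcut, h.2 hcut]

theorem stmt_11 {V : Type*} [Fintype V] (G : SimpleGraph V) (hG : ClassB G)
    (h4 : 4 ≤ gdiam G) (S : Set V) (hS : AssocSet G S)
    (z1 z2 : S) (hne : z1 ≠ z2) (hc : gcenter (G.induce S) = {z1, z2}) :
    CutVtx G z1.1 ∨ CutVtx G z2.1 :=
  stmt_11_general G hG S hS z1 z2 hne hc
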